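/- arXiv:1702.08225 — 2 statements merged into one kernel-verified Lean document; each statement's English description precedes it below -/
import Mathlib

section
/- Let Γ be an Arf numerical semigroup with distances d_i = ρ_{i+1} − ρ_i between consecutive elements. If d_i < d_{i−1}, then the cardinality of Ap(Γ, d_i) equals i − 1 + d_i. -/
/-!
Write `d_k = ρ (k + 1) - ρ k`. The Arf property gives `s + d_k ∈ Γ` for every `s ∈ Γ` with
`s ≥ ρ k`; in particular the gaps `d_k` are non-increasing. So when `d_i < d_{i-1}`, the elements
`m ∈ Γ` with `m + d_i ∉ Γ` are exactly `ρ 1, …, ρ (i - 1)`: from `ρ i` on, adding `d_i` stays in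
`Γ`, while for `k < i` the point `ρ k + d_i` falls strictly between `ρ k` and `ρ (k + 1)`, because
`d_k ≥ d_{i-1} > d_i`. Thus `#Ap(Γ, -d_i) = i - 1`, and `#Ap(Γ, x) = #Ap(Γ, -x) + x` concludes.
-/

/-- A numerical semigroup, viewed as a set of integers: contained in ℕ,
contains 0, closed under addition, with finite complement in ℕ. -/
def IsNumericalSemigroup (Γ : Set ℤ) : Prop :=
  (∀ n ∈ Γ, 0 ≤ n) ∧ (0 : ℤ) ∈ Γ ∧ (∀ a ∈ Γ, ∀ b ∈ Γ, a + b ∈ Γ) ∧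
    {n : ℤ | 0 ≤ n ∧ n ∉ Γ}.Finite

/-- The set of divisors of `x` in `Γ`. -/
def SetDiv (Γ : Set ℤ) (x : ℤ) : Set ℤ := {s ∈ Γ | x - s ∈ Γ}

/-- The Apéry set of `Γ` with respect to an integer `x`. -/
def Ap (Γ : Set ℤ) (x : ℤ) : Set ℤ := {m ∈ Γ | m - x ∉ Γ}

/-- The Arf property. -/
def IsArf (Γ : Set ℤ) : Prop :=
  ∀ x ∈ Γ, ∀ y ∈ Γ, ∀ z ∈ Γ, z ≤ y → y ≤ x → x + y - z ∈ Γ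

/-- The translate Γ_{e'} = {0} ∪ (e' + Γ). -/
def ShiftSG (Γ : Set ℤ) (e' : ℤ) : Set ℤ := {0} ∪ (fun s => e' + s) '' Γ

/-- `c` is the conductor of `Γ`: least integer with `c + ℕ ⊆ Γ`. -/
def IsConductor (Γ : Set ℤ) (c : ℤ) : Prop :=
  (∀ n, c ≤ n → n ∈ Γ) ∧ ∀ c', (∀ n, c' ≤ n → n ∈ Γ) → c ≤ c'

/-- `e` is the multiplicity of `Γ`: its least nonzero element. -/
def IsMultiplicity (Γ : Set ℤ) (e : ℤ) : Prop :=
  e ∈ Γ ∧ e ≠ 0 ∧ ∀ s ∈ Γ, s ≠ 0 → e ≤ s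

/-- The genus of `Γ`: the number of gaps. -/
noncomputable def genus (Γ : Set ℤ) : ℕ := {n : ℤ | 0 ≤ n ∧ n ∉ Γ}.ncard

/-- `m` is irreducible in `Γ` if its only divisors are `0` and `m`. -/
def IrreducibleIn (Γ : Set ℤ) (m : ℤ) : Prop :=
  m ∈ Γ ∧ m ≠ 0 ∧ SetDiv Γ m = {0, m}

/-- The second Feng-Rao number of `Γ`, with multiplicity `e`. -/
noncomputable def FengRaoNumber2 (Γ : Set ℤ) (e : ℤ) : ℕ :=
  sInf {n : ℕ | ∃ x : ℤ, 1 ≤ x ∧ x ≤ e ∧ (Ap Γ x).ncard = n}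

/-- The first (classical) Feng-Rao distance of `m` in `Γ`. -/
noncomputable def FengRaoDist1 (Γ : Set ℤ) (m : ℤ) : ℕ :=
  sInf {n : ℕ | ∃ m₁ ∈ Γ, m ≤ m₁ ∧ (SetDiv Γ m₁).ncard = n}

/-- The second (generalized) Feng-Rao distance of `m` in `Γ`. -/
noncomputable def FengRaoDist2 (Γ : Set ℤ) (m : ℤ) : ℕ :=
  sInf {n : ℕ | ∃ m₁ ∈ Γ, ∃ m₂ ∈ Γ, m ≤ m₁ ∧ m₁ < m₂ ∧
    (SetDiv Γ m₁ ∪ SetDiv Γ m₂).ncard = n}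

theorem exists_forall_ge_mem_of_finite_gaps {Γ : Set ℤ}
    (hfin : {n : ℤ | 0 ≤ n ∧ n ∉ Γ}.Finite) : ∃ c, ∀ n, c ≤ n → n ∈ Γ := by
  obtain ⟨b, hb⟩ := hfin.bddAbove
  refine ⟨max b 0 + 1, fun n hn => ?_⟩
  by_contra hn'
  have := hb ⟨by omega, hn'⟩
  omega

section Apery

variable {Γ : Set ℤ} {c x : ℤ}

theorem Ap_neg_union_eq (hnn : ∀ n ∈ Γ, 0 ≤ n) (hc : ∀ n, c ≤ n → n ∈ Γ) (hx : 0 ≤ x) :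
    Ap Γ (-x) ∪ {m ∈ Γ | m + x ∈ Γ} ∩ Set.Ico 0 c = Γ ∩ Set.Ico 0 c := by
  ext m
  simp only [Ap, sub_neg_eq_add, Set.mem_union, Set.mem_inter_iff, Set.mem_ofPred_eq,
    Set.mem_Ico]
  constructor
  · rintro (⟨hm, hmx⟩ | ⟨⟨hm, -⟩, hm0, hmc⟩)
    · exact ⟨hm, hnn m hm, by by_contra h; exact hmx (hc _ (by omega))⟩
    · exact ⟨hm, hm0, hmc⟩
  · rintro ⟨hm, hm0, hmc⟩
    by_cases hmx : m + x ∈ Γ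
    exacts [Or.inr ⟨⟨hm, hmx⟩, hm0, hmc⟩, Or.inl ⟨hm, hmx⟩]

theorem Ap_union_image_add_eq (hnn : ∀ n ∈ Γ, 0 ≤ n) (hc : ∀ n, c ≤ n → n ∈ Γ) (hx : 0 ≤ x) :
    Ap Γ x ∪ (· + x) '' ({m ∈ Γ | m + x ∈ Γ} ∩ Set.Ico 0 c) =
      Γ ∩ Set.Ico 0 c ∪ Set.Ico c (c + x) := by
  ext m
  simp only [Ap, Set.mem_union, Set.mem_inter_iff, Set.mem_ofPred_eq, Set.mem_Ico,
    Set.mem_image]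
  constructor
  · rintro (⟨hm, hmx⟩ | ⟨b, ⟨⟨-, hb⟩, hb0, hbc⟩, rfl⟩)
    · have : m - x < c := by by_contra h; exact hmx (hc _ (by omega))
      have := hnn m hm
      by_cases hmc : m < c
      exacts [Or.inl ⟨hm, this, hmc⟩, Or.inr ⟨by omega, by omega⟩]
    · by_cases hbc' : b + x < c
      exacts [Or.inl ⟨hb, by omega, hbc'⟩, Or.inr ⟨by omega, by omega⟩]
  · rintro (⟨hm, hm0, hmc⟩ | ⟨hcm, hmc⟩)
    · by_cases hmx : m - x ∈ Γ
      · exact Or.inr ⟨m - x, ⟨⟨hmx, by simpa using hm⟩, hnn _ hmx, by omega⟩, by ring⟩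
      · exact Or.inl ⟨hm, hmx⟩
    · by_cases hmx : m - x ∈ Γ
      · exact Or.inr ⟨m - x, ⟨⟨hmx, by simpa using hc m hcm⟩, hnn _ hmx, by omega⟩, by ring⟩
      · exact Or.inl ⟨hc m hcm, hmx⟩

/-- Past a bound `c` with `[c, ∞) ⊆ Γ`, both `Γ ∩ [0, c)` and `Γ ∩ [0, c + x)` split into an Apéry
set and a copy of `B = {m ∈ Γ ∩ [0, c) | m + x ∈ Γ}`, and the two ranges differ by `[c, c + x)`. -/
theorem ncard_Ap_eq_ncard_Ap_neg_add (hnn : ∀ n ∈ Γ, 0 ≤ n)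
    (hfin : {n : ℤ | 0 ≤ n ∧ n ∉ Γ}.Finite) (hx : 0 ≤ x) :
    ((Ap Γ x).ncard : ℤ) = (Ap Γ (-x)).ncard + x := by
  obtain ⟨c, hc⟩ := exists_forall_ge_mem_of_finite_gaps hfin
  set B := {m ∈ Γ | m + x ∈ Γ} ∩ Set.Ico 0 c
  have hlow := Ap_neg_union_eq hnn hc hx
  have hhigh := Ap_union_image_add_eq hnn hc hx
  have hfin_low : (Γ ∩ Set.Ico 0 c).Finite := (Set.finite_Ico 0 c).subset Set.inter_subset_right
  have hB : B.Finite := (Set.finite_Ico 0 c).subset Set.inter_subset_right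
  have hlow_card : (Ap Γ (-x)).ncard + B.ncard = (Γ ∩ Set.Ico 0 c).ncard := by
    have hAp : (Ap Γ (-x)).Finite := hfin_low.subset (hlow ▸ Set.subset_union_left)
    have hdisj : Disjoint (Ap Γ (-x)) B :=
      Set.disjoint_left.2 fun m hm hmB => hm.2 (by simpa using hmB.1.2)
    rw [← hlow, Set.ncard_union_eq hdisj hAp hB]
  have hhigh_card : (Ap Γ x).ncard + B.ncard = (Γ ∩ Set.Ico 0 c).ncard + x.toNat := by
    have hAp : (Ap Γ x).Finite :=
      (hfin_low.union (Set.finite_Ico _ _)).subset (hhigh ▸ Set.subset_union_left)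
    have hdisj : Disjoint (Ap Γ x) ((· + x) '' B) :=
      Set.disjoint_left.2 fun m hm ⟨b, hb, hbm⟩ => hm.2 (by simpa [← hbm] using hb.1.1)
    have hdisj' : Disjoint (Γ ∩ Set.Ico 0 c) (Set.Ico c (c + x)) :=
      Set.disjoint_left.2 fun m hm hm' => (hm.2.2.trans_le hm'.1).false
    have hIco : (Set.Ico c (c + x)).ncard = x.toNat := by
      rw [← Finset.coe_Ico, Set.ncard_coe_finset, Int.card_Ico, add_sub_cancel_left]
    rw [← Set.ncard_image_of_injective B (add_left_injective x),
      ← Set.ncard_union_eq hdisj hAp (hB.image _), hhigh,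
      Set.ncard_union_eq hdisj' hfin_low (Set.finite_Ico _ _), hIco]
  omega

end Apery

section Enumeration

variable {Γ : Set ℤ} {ρ : ℕ → ℤ}

theorem StrictMonoOn.succ_le_of_lt_of_mem_image (hρ : StrictMonoOn ρ (Set.Ici 1)) {j : ℕ}
    (hj : 1 ≤ j) {x : ℤ} (hx : x ∈ ρ '' Set.Ici 1) (hlt : ρ j < x) :
    ρ (j + 1) ≤ x := by
  obtain ⟨k, hk, rfl⟩ := hx
  have hjk : j < k := (hρ.lt_iff_lt hj hk).1 hlt
  exact hρ.monotoneOn (Set.mem_Ici.2 (by omega)) hk hjk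

/-- For `s > ρ k`, this is the Arf condition for `s ≥ ρ (k + 1) ≥ ρ k`. -/
theorem IsArf.add_sub_mem (hA : IsArf Γ) (hρ : StrictMonoOn ρ (Set.Ici 1))
    (hrange : Γ = ρ '' Set.Ici 1) {k : ℕ} (hk : 1 ≤ k) {s : ℤ} (hs : s ∈ Γ) (hks : ρ k ≤ s) :
    s + (ρ (k + 1) - ρ k) ∈ Γ := by
  subst hrange
  have hρk : ρ k ∈ ρ '' Set.Ici 1 := ⟨k, hk, rfl⟩
  have hρk' : ρ (k + 1) ∈ ρ '' Set.Ici 1 := ⟨k + 1, by simp, rfl⟩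
  have hlt : ρ k < ρ (k + 1) := hρ hk (by simp) (by omega)
  rcases hks.eq_or_lt with rfl | hks
  · simpa using hρk'
  · have := hA s hs _ hρk' _ hρk hlt.le (hρ.succ_le_of_lt_of_mem_image hk hs hks)
    rwa [add_sub_assoc] at this

theorem IsArf.antitoneOn_gap (hA : IsArf Γ) (hρ : StrictMonoOn ρ (Set.Ici 1))
    (hrange : Γ = ρ '' Set.Ici 1) : AntitoneOn (fun k => ρ (k + 1) - ρ k) (Set.Ici 1) := by
  refine antitoneOn_nat_Ici_of_succ_le fun k hk => ?_
  have hlt : ρ k < ρ (k + 1) := hρ (Set.mem_Ici.2 hk) (Set.mem_Ici.2 (by omega)) (by omega)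
  have hmem := hA.add_sub_mem hρ hrange hk (hrange ▸ ⟨k + 1, by simp, rfl⟩) hlt.le
  have hlt' : ρ (k + 1) < ρ (k + 1) + (ρ (k + 1) - ρ k) := by omega
  have := hρ.succ_le_of_lt_of_mem_image (by omega) (hrange ▸ hmem) hlt'
  omega

theorem IsArf.Ap_neg_gap_eq (hA : IsArf Γ) (hρ : StrictMonoOn ρ (Set.Ici 1))
    (hrange : Γ = ρ '' Set.Ici 1) {i : ℕ} (hi : 1 ≤ i)
    (hd : ρ (i + 1) - ρ i < ρ i - ρ (i - 1)) :
    Ap Γ (-(ρ (i + 1) - ρ i)) = ρ '' Set.Ico 1 i := by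
  ext m
  simp only [Ap, sub_neg_eq_add, Set.mem_ofPred_eq]
  constructor
  · rintro ⟨hm, hmd⟩
    obtain ⟨k, hk, rfl⟩ := hrange ▸ hm
    refine ⟨k, ⟨hk, ?_⟩, rfl⟩
    by_contra! hik
    exact hmd (hA.add_sub_mem hρ hrange hi hm (hρ.monotoneOn (Set.mem_Ici.2 hi) hk hik))
  · rintro ⟨k, ⟨hk, hki⟩, rfl⟩
    refine ⟨hrange ▸ ⟨k, hk, rfl⟩, fun hmem => ?_⟩
    have hgap_pos : ρ i < ρ (i + 1) := hρ (Set.mem_Ici.2 hi) (Set.mem_Ici.2 (by omega)) (by omega)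
    have hnext := hρ.succ_le_of_lt_of_mem_image hk (hrange ▸ hmem) (by omega)
    have hanti : ρ (i - 1 + 1) - ρ (i - 1) ≤ ρ (k + 1) - ρ k :=
      hA.antitoneOn_gap hρ hrange (Set.mem_Ici.2 hk) (Set.mem_Ici.2 (by omega)) (by omega)
    rw [Nat.sub_add_cancel (by omega : 1 ≤ i)] at hanti
    omega

end Enumeration

theorem card_apery_d (Γ : Set ℤ) (hΓ : IsNumericalSemigroup Γ)
    (hA : IsArf Γ) (ρ : ℕ → ℤ)
    (hmono : ∀ i j, 1 ≤ i → i < j → ρ i < ρ j)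
    (hrange : Γ = {x : ℤ | ∃ i : ℕ, 1 ≤ i ∧ ρ i = x})
    (i : ℕ) (hi : 2 ≤ i)
    (hd : ρ (i + 1) - ρ i < ρ i - ρ (i - 1)) :
    ((Ap Γ (ρ (i + 1) - ρ i)).ncard : ℤ) = (i : ℤ) - 1 + (ρ (i + 1) - ρ i) := by
  have hρ : StrictMonoOn ρ (Set.Ici 1) := fun a ha b _ hab => hmono a b ha hab
  have hgap_nonneg : 0 ≤ ρ (i + 1) - ρ i := sub_nonneg.2 (hmono i (i + 1) (by omega) (by omega)).le
  rw [ncard_Ap_eq_ncard_Ap_neg_add hΓ.1 hΓ.2.2.2 hgap_nonneg,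
    hA.Ap_neg_gap_eq hρ hrange (by omega) hd,
    (hρ.injOn.mono Set.Ico_subset_Ici_self).ncard_image,
    ← Finset.coe_Ico, Set.ncard_coe_finset, Nat.card_Ico]
  omega
end

section
/- Let Γ be a numerical semigroup, e' ∈ Γ nonzero, and m, m' ∈ Γ. Then D_{Γ_{e'}}(2e'+m) ∪ D_{Γ_{e'}}(2e'+m') = (e' + (D_Γ(m) ∪ D_Γ(m'))) ∪ {0, 2e'+m, 2e'+m'}. If moreover |m − m'| < e', this union is disjoint, and hence #(D_Γ(m) ∪ D_Γ(m')) + 2 ≤ #(D_{Γ_{e'}}(2e'+m) ∪ D_{Γ_{e'}}(2e'+m')) ≤ #(D_Γ(m) ∪ D_Γ(m')) + 3. -/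
/-!
Every element of `Γ_{e'}` other than `0` is `e'` plus an element of `Γ`, so a divisor `s ≠ 0`
of `2e' + μ` in `Γ_{e'}` is either `2e' + μ` itself (cofactor `0`) or `e' + t` with `t`
dividing `μ` in `Γ`. When `|m - m'| < e'`, the shifted divisors lie in `(e', e' + max m m']`,
which misses `0`, `2e' + m` and `2e' + m'`, so the cardinalities add up.
-/

theorem setDiv_subset_Icc {Γ : Set ℤ} (hpos : ∀ n ∈ Γ, 0 ≤ n) (x : ℤ) :
    SetDiv Γ x ⊆ Set.Icc 0 x := fun s ⟨hs, hxs⟩ => ⟨hpos s hs, by linarith [hpos _ hxs]⟩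

theorem setDiv_finite {Γ : Set ℤ} (hpos : ∀ n ∈ Γ, 0 ≤ n) (x : ℤ) : (SetDiv Γ x).Finite :=
  (Set.finite_Icc 0 x).subset (setDiv_subset_Icc hpos x)

theorem setDiv_shiftSG_two_mul_add {Γ : Set ℤ} {e' μ : ℤ} (hμ : e' + μ ∈ Γ) :
    SetDiv (ShiftSG Γ e') (2 * e' + μ) =
      ((fun s => e' + s) '' SetDiv Γ μ) ∪ {0, 2 * e' + μ} := by
  ext s
  simp only [SetDiv, ShiftSG, Set.mem_union, Set.mem_image, Set.mem_insert_iff,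
    Set.mem_singleton_iff, Set.mem_sep_iff]
  constructor
  · rintro ⟨rfl | ⟨t, ht, rfl⟩, hcof⟩
    · exact Or.inr (Or.inl rfl)
    · rcases hcof with hcof | ⟨u, hu, hcof⟩
      · exact Or.inr (Or.inr (by linarith))
      · have hu' : μ - t = u := by linarith
        exact Or.inl ⟨t, ⟨ht, hu' ▸ hu⟩, rfl⟩
  · rintro (⟨t, ⟨ht, hcof⟩, rfl⟩ | rfl | rfl)
    · exact ⟨Or.inr ⟨t, ht, rfl⟩, Or.inr ⟨μ - t, hcof, by ring⟩⟩
    · exact ⟨Or.inl rfl, Or.inr ⟨e' + μ, hμ, by ring⟩⟩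
    · exact ⟨Or.inr ⟨e' + μ, hμ, by ring⟩, Or.inl (by ring)⟩

theorem setDiv_shiftSG_union {Γ : Set ℤ} {e' m m' : ℤ} (hm : e' + m ∈ Γ) (hm' : e' + m' ∈ Γ) :
    SetDiv (ShiftSG Γ e') (2 * e' + m) ∪ SetDiv (ShiftSG Γ e') (2 * e' + m') =
      ((fun s => e' + s) '' (SetDiv Γ m ∪ SetDiv Γ m')) ∪ {0, 2 * e' + m, 2 * e' + m'} := by
  rw [setDiv_shiftSG_two_mul_add hm, setDiv_shiftSG_two_mul_add hm', Set.image_union]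
  ext s
  simp only [Set.mem_union, Set.mem_insert_iff, Set.mem_singleton_iff]
  tauto

theorem disjoint_image_add_setDiv_union {Γ : Set ℤ} (hpos : ∀ n ∈ Γ, 0 ≤ n) {e' m m' : ℤ}
    (hclose : |m - m'| < e') :
    Disjoint ((fun s => e' + s) '' (SetDiv Γ m ∪ SetDiv Γ m'))
      ({0, 2 * e' + m, 2 * e' + m'} : Set ℤ) := by
  obtain ⟨hlt, hgt⟩ := abs_lt.mp hclose
  rw [Set.disjoint_left]
  rintro _ ⟨t, ht, rfl⟩ hx
  simp only [Set.mem_insert_iff, Set.mem_singleton_iff] at hx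
  rcases ht with ht | ht
  · obtain ⟨h0, h1⟩ := setDiv_subset_Icc hpos m ht
    omega
  · obtain ⟨h0, h1⟩ := setDiv_subset_Icc hpos m' ht
    omega

theorem two_le_ncard_insert_pair {α : Type*} {a b : α} (hab : a ≠ b) (c : α) :
    2 ≤ ({a, b, c} : Set α).ncard :=
  (Set.ncard_pair hab).symm.le.trans
    (Set.ncard_le_ncard (Set.insert_subset_insert (Set.singleton_subset_iff.mpr (.inl rfl))))

theorem ncard_insert_pair_le_three {α : Type*} (a b c : α) : ({a, b, c} : Set α).ncard ≤ 3 :=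
  calc ({a, b, c} : Set α).ncard ≤ ({b, c} : Set α).ncard + 1 := Set.ncard_insert_le _ _
    _ ≤ ({c} : Set α).ncard + 1 + 1 := by gcongr; exact Set.ncard_insert_le _ _
    _ = 3 := by rw [Set.ncard_singleton]

theorem divisors_trans_pair_general (Γ : Set ℤ) (hΓ : IsNumericalSemigroup Γ)
    (e' : ℤ) (he' : e' ∈ Γ)
    (m m' : ℤ) (hm : m ∈ Γ) (hm' : m' ∈ Γ) :
    (SetDiv (ShiftSG Γ e') (2 * e' + m) ∪ SetDiv (ShiftSG Γ e') (2 * e' + m') =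
      ((fun s => e' + s) '' (SetDiv Γ m ∪ SetDiv Γ m')) ∪
        {0, 2 * e' + m, 2 * e' + m'}) ∧
    (|m - m'| < e' →
      Disjoint ((fun s => e' + s) '' (SetDiv Γ m ∪ SetDiv Γ m'))
        ({0, 2 * e' + m, 2 * e' + m'} : Set ℤ) ∧
      (SetDiv Γ m ∪ SetDiv Γ m').ncard + 2 ≤
        (SetDiv (ShiftSG Γ e') (2 * e' + m) ∪
          SetDiv (ShiftSG Γ e') (2 * e' + m')).ncard ∧
      (SetDiv (ShiftSG Γ e') (2 * e' + m) ∪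
          SetDiv (ShiftSG Γ e') (2 * e' + m')).ncard ≤
        (SetDiv Γ m ∪ SetDiv Γ m').ncard + 3) := by
  obtain ⟨hpos, -, hadd, -⟩ := hΓ
  have hunion := setDiv_shiftSG_union (hadd e' he' m hm) (hadd e' he' m' hm')
  refine ⟨hunion, fun hclose => ?_⟩
  have hdisj := disjoint_image_add_setDiv_union hpos hclose
  have hcard : (SetDiv (ShiftSG Γ e') (2 * e' + m) ∪ SetDiv (ShiftSG Γ e') (2 * e' + m')).ncard =
      (SetDiv Γ m ∪ SetDiv Γ m').ncard + ({0, 2 * e' + m, 2 * e' + m'} : Set ℤ).ncard := by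
    rw [hunion, Set.ncard_union_eq hdisj
      (((setDiv_finite hpos m).union (setDiv_finite hpos m')).image _),
      Set.ncard_image_of_injective _ (add_right_injective e')]
  have hzero_ne : (0 : ℤ) ≠ 2 * e' + m := by
    have := hpos m hm
    have := abs_nonneg (m - m')
    omega
  have hlower := two_le_ncard_insert_pair hzero_ne (2 * e' + m')
  have hupper := ncard_insert_pair_le_three (0 : ℤ) (2 * e' + m) (2 * e' + m')
  exact ⟨hdisj, by omega, by omega⟩

theorem divisors_trans_pair (Γ : Set ℤ) (hΓ : IsNumericalSemigroup Γ)
    (e' : ℤ) (he' : e' ∈ Γ) (hne : e' ≠ 0)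
    (m m' : ℤ) (hm : m ∈ Γ) (hm' : m' ∈ Γ) :
    (SetDiv (ShiftSG Γ e') (2 * e' + m) ∪ SetDiv (ShiftSG Γ e') (2 * e' + m') =
      ((fun s => e' + s) '' (SetDiv Γ m ∪ SetDiv Γ m')) ∪
        {0, 2 * e' + m, 2 * e' + m'}) ∧
    (|m - m'| < e' →
      Disjoint ((fun s => e' + s) '' (SetDiv Γ m ∪ SetDiv Γ m'))
        ({0, 2 * e' + m, 2 * e' + m'} : Set ℤ) ∧
      (SetDiv Γ m ∪ SetDiv Γ m').ncard + 2 ≤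
        (SetDiv (ShiftSG Γ e') (2 * e' + m) ∪
          SetDiv (ShiftSG Γ e') (2 * e' + m')).ncard ∧
      (SetDiv (ShiftSG Γ e') (2 * e' + m) ∪
          SetDiv (ShiftSG Γ e') (2 * e' + m')).ncard ≤
        (SetDiv Γ m ∪ SetDiv Γ m').ncard + 3) :=
  divisors_trans_pair_general Γ hΓ e' he' m m' hm hm'
end
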